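/- (Theorem 3.2, case d=1; formula (3.22) underlying the inverse-scattering reconstruction.) There exists E₀ > 0 such that the matrix A(κ) is invertible for all κ ≥ √E₀, and the function F : ℝ → ℂ defined by F(p) = (2π)^{-1} Σ_{j=1}^n (−α_j^{-1}) e^{i p y_j} − χ(p) f(p/2, −p/2), where χ(p) = 0 for |p| ≤ 2√E₀ and χ(p) = 1 for |p| > 2√E₀, and where f(p/2, −p/2) is the scattering amplitude evaluated at κ = |p|/2, belongs to L^r(ℝ) for every r with 1 < r ≤ 2. -/

import Mathlib

open Complex Finset Matrix

noncomputable section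

/-- The matrix `A(κ)` for a one-dimensional multipoint potential:
`A(κ)_{jj} = α_j + 1/(2iκ)`, `A(κ)_{jj'} = e^{iκ|y_j - y_{j'}|}/(2iκ)` for `j ≠ j'`. -/
def A1 (n : ℕ) (y : Fin n → ℝ) (α : Fin n → ℂ) (κ : ℝ) : Matrix (Fin n) (Fin n) ℂ :=
  fun j j' => (if j = j' then α j else 0) +
    Complex.exp (Complex.I * κ * |y j - y j'|) / (2 * Complex.I * κ)

/-- `q(k) = A(κ)⁻¹ b(k)` with `b(k)_j = -e^{i k y_j}`. -/
def q1 (n : ℕ) (y : Fin n → ℝ) (α : Fin n → ℂ) (κ k : ℝ) : Fin n → ℂ :=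
  (A1 n y α κ)⁻¹ *ᵥ fun j => -Complex.exp (Complex.I * k * y j)

/-- The scattering amplitude `f(k,ℓ) = (2π)⁻¹ Σ_j q_j(k) e^{-iℓ y_j}`. -/
def f1 (n : ℕ) (y : Fin n → ℝ) (α : Fin n → ℂ) (κ k ℓ : ℝ) : ℂ :=
  (2 * Real.pi : ℂ)⁻¹ * ∑ j, q1 n y α κ k j * Complex.exp (-Complex.I * ℓ * y j)

/-- The matrix `W(κ)` with `W(κ)_{jj'} = (i/2) α_j⁻¹ e^{iκ|y_j - y_{j'}|}`. -/
def W1 (n : ℕ) (y : Fin n → ℝ) (α : Fin n → ℂ) (κ : ℝ) : Matrix (Fin n) (Fin n) ℂ :=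
  fun j j' => Complex.I / 2 * (α j)⁻¹ * Complex.exp (Complex.I * κ * |y j - y j'|)

/-- The coefficients `C_m(k,ℓ) = Σ_{j,j'} [W(κ)^m]_{jj'} α_{j'}⁻¹ e^{i(k y_{j'} - ℓ y_j)}`. -/
def C1coef (n : ℕ) (y : Fin n → ℝ) (α : Fin n → ℂ) (κ : ℝ) (m : ℕ) (k ℓ : ℝ) : ℂ :=
  ∑ j, ∑ j', (W1 n y α κ ^ m) j j' * (α j')⁻¹ *
    Complex.exp (Complex.I * (k * y j' - ℓ * y j))

/-!
Write `A(κ) = diag α + G(κ)`, where every entry of `G(κ)` has modulus `1/(2κ)`. In sup norms,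
`‖G(κ) v‖ ≤ n/(2κ) ‖v‖`, so for `κ ≥ n ‖α⁻¹‖` the perturbation is at most half of `diag α`:
`A(κ)` is invertible and `A(κ)⁻¹ b = α⁻¹ b + O(n ‖α⁻¹‖² / κ)`. Consequently the backscattering
amplitude `f(p/2, -p/2)` differs from the Born term `(2π)⁻¹ Σ_j -α_j⁻¹ e^{i p y_j}` by `O(1/|p|)`,
while the Born term is bounded; a function dominated by `C (1 + |p|)⁻¹` lies in `L^r` for `r > 1`.
-/

open MeasureTheory
open scoped ENNReal

section DiagonalDominance

variable {ι 𝕜 : Type*} [Fintype ι] [NormedField 𝕜]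

lemma norm_mulVec_le_of_norm_apply_le {B : Matrix ι ι 𝕜} {c : ℝ} (hc : 0 ≤ c)
    (hB : ∀ i j, ‖B i j‖ ≤ c) (v : ι → 𝕜) :
    ‖B *ᵥ v‖ ≤ Fintype.card ι * c * ‖v‖ := by
  refine (pi_norm_le_iff_of_nonneg (by positivity)).2 fun i => ?_
  calc ‖∑ j, B i j * v j‖ ≤ ∑ j, ‖B i j‖ * ‖v j‖ := norm_sum_le_of_le _ fun j _ => norm_mul_le _ _
    _ ≤ ∑ _j, c * ‖v‖ :=
        Finset.sum_le_sum fun j _ => mul_le_mul (hB i j) (norm_le_pi_norm v j) (norm_nonneg _) hc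
    _ = Fintype.card ι * c * ‖v‖ := by simp [mul_assoc]

variable [DecidableEq ι] {α : ι → 𝕜} {B : Matrix ι ι 𝕜} {β : ℝ}

lemma inv_mul_diagonal_add_mulVec (hα : ∀ i, α i ≠ 0) (v : ι → 𝕜) :
    α⁻¹ * ((diagonal α + B) *ᵥ v) = v + α⁻¹ * (B *ᵥ v) := by
  ext i
  simp [add_mulVec, mulVec_diagonal, mul_add, inv_mul_cancel_left₀ (hα i)]

lemma norm_le_of_diagonal_add (hα : ∀ i, α i ≠ 0) (hB : ∀ v, ‖B *ᵥ v‖ ≤ β * ‖v‖)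
    (hβ : 2 * ‖α⁻¹‖ * β ≤ 1) (v : ι → 𝕜) :
    ‖v‖ ≤ 2 * ‖α⁻¹‖ * ‖(diagonal α + B) *ᵥ v‖ := by
  have h : ‖v‖ ≤ ‖α⁻¹‖ * ‖(diagonal α + B) *ᵥ v‖ + ‖α⁻¹‖ * (β * ‖v‖) := calc
    ‖v‖ = ‖α⁻¹ * ((diagonal α + B) *ᵥ v) - α⁻¹ * (B *ᵥ v)‖ := by
        rw [inv_mul_diagonal_add_mulVec hα, add_sub_cancel_right]
    _ ≤ ‖α⁻¹‖ * ‖(diagonal α + B) *ᵥ v‖ + ‖α⁻¹‖ * (β * ‖v‖) := by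
        refine (norm_sub_le _ _).trans (add_le_add (norm_mul_le _ _) ?_)
        exact (norm_mul_le _ _).trans (by gcongr; exact hB v)
  nlinarith [mul_nonneg (sub_nonneg.2 hβ) (norm_nonneg v)]

lemma norm_sub_inv_mul_le_of_diagonal_add (hα : ∀ i, α i ≠ 0) (hB : ∀ v, ‖B *ᵥ v‖ ≤ β * ‖v‖)
    (hβ₀ : 0 ≤ β) (hβ : 2 * ‖α⁻¹‖ * β ≤ 1) (v : ι → 𝕜) :
    ‖v - α⁻¹ * ((diagonal α + B) *ᵥ v)‖ ≤ 2 * ‖α⁻¹‖ ^ 2 * β * ‖(diagonal α + B) *ᵥ v‖ := calc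
  ‖v - α⁻¹ * ((diagonal α + B) *ᵥ v)‖ = ‖α⁻¹ * (B *ᵥ v)‖ := by
      rw [inv_mul_diagonal_add_mulVec hα, sub_add_cancel_left, norm_neg]
  _ ≤ ‖α⁻¹‖ * (β * ‖v‖) := (norm_mul_le _ _).trans (by gcongr; exact hB v)
  _ ≤ ‖α⁻¹‖ * (β * (2 * ‖α⁻¹‖ * ‖(diagonal α + B) *ᵥ v‖)) := by
      gcongr; exact norm_le_of_diagonal_add hα hB hβ v
  _ = 2 * ‖α⁻¹‖ ^ 2 * β * ‖(diagonal α + B) *ᵥ v‖ := by ring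

lemma isUnit_diagonal_add (hα : ∀ i, α i ≠ 0) (hB : ∀ v, ‖B *ᵥ v‖ ≤ β * ‖v‖)
    (hβ : 2 * ‖α⁻¹‖ * β ≤ 1) : IsUnit (diagonal α + B) := by
  refine mulVec_injective_iff_isUnit.1 fun v w hvw => ?_
  have h := norm_le_of_diagonal_add hα hB hβ (v - w)
  rw [mulVec_sub, hvw, sub_self, norm_zero, mul_zero] at h
  exact sub_eq_zero.1 (norm_le_zero_iff.1 h)

end DiagonalDominance

lemma norm_two_pi_inv_le_one : ‖(2 * Real.pi : ℂ)⁻¹‖ ≤ 1 := by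
  rw [norm_inv]
  refine inv_le_one_of_one_le₀ ?_
  rw [show (2 * Real.pi : ℂ) = ((2 * Real.pi : ℝ) : ℂ) by push_cast; ring, Complex.norm_real,
    Real.norm_of_nonneg Real.two_pi_pos.le]
  linarith [Real.pi_gt_three]

lemma norm_fourierSum_le {n : ℕ} (y : Fin n → ℝ) (u : Fin n → ℂ) (t : ℝ) :
    ‖(2 * Real.pi : ℂ)⁻¹ * ∑ j, u j * cexp (I * t * y j)‖ ≤ n * ‖u‖ := by
  rw [norm_mul]
  refine (mul_le_of_le_one_left (norm_nonneg _) norm_two_pi_inv_le_one).trans ?_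
  calc ‖∑ j, u j * cexp (I * t * y j)‖ ≤ ∑ _j : Fin n, ‖u‖ := by
        refine norm_sum_le_of_le _ fun j _ => ?_
        rw [norm_mul, mul_assoc, ← ofReal_mul, norm_exp_I_mul_ofReal, mul_one]
        exact norm_le_pi_norm u j
    _ = n * ‖u‖ := by simp

section Scattering

variable {n : ℕ} {y : Fin n → ℝ} {α : Fin n → ℂ} {κ : ℝ}

def couplingMatrix (n : ℕ) (y : Fin n → ℝ) (κ : ℝ) : Matrix (Fin n) (Fin n) ℂ :=
  of fun j j' => cexp (I * κ * |y j - y j'|) / (2 * I * κ)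

lemma A1_eq_diagonal_add_couplingMatrix :
    A1 n y α κ = diagonal α + couplingMatrix n y κ := by
  ext j j'
  simp [A1, couplingMatrix, diagonal_apply]

lemma norm_couplingMatrix_mulVec_le (hκ : 0 < κ) (v : Fin n → ℂ) :
    ‖couplingMatrix n y κ *ᵥ v‖ ≤ n * (2 * κ)⁻¹ * ‖v‖ := by
  simpa using norm_mulVec_le_of_norm_apply_le (by positivity) (fun j j' => le_of_eq <| by
    rw [couplingMatrix, of_apply, norm_div, mul_assoc, ← ofReal_mul, norm_exp_I_mul_ofReal]
    simp [abs_of_pos hκ]) v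

lemma isUnit_A1 (hα : ∀ j, α j ≠ 0) (hκ : 0 < κ) (hκα : n * ‖α⁻¹‖ ≤ κ) :
    IsUnit (A1 n y α κ) := by
  rw [A1_eq_diagonal_add_couplingMatrix]
  refine isUnit_diagonal_add hα (norm_couplingMatrix_mulVec_le hκ) ?_
  field_simp
  linarith

lemma A1_mulVec_q1 (hA : IsUnit (A1 n y α κ)) (k : ℝ) :
    A1 n y α κ *ᵥ q1 n y α κ k = fun j => -cexp (I * k * y j) := by
  rw [q1, mulVec_mulVec, mul_nonsing_inv _ ((isUnit_iff_isUnit_det _).1 hA), one_mulVec]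

lemma norm_q1_sub_inv_mul_le (hα : ∀ j, α j ≠ 0) (hκ : 0 < κ) (hκα : n * ‖α⁻¹‖ ≤ κ) (k : ℝ) :
    ‖q1 n y α κ k - α⁻¹ * fun j => -cexp (I * k * y j)‖ ≤ n * ‖α⁻¹‖ ^ 2 / κ := by
  have h := norm_sub_inv_mul_le_of_diagonal_add hα (norm_couplingMatrix_mulVec_le (y := y) hκ)
    (by positivity) (by field_simp; linarith) (q1 n y α κ k)
  rw [← A1_eq_diagonal_add_couplingMatrix, A1_mulVec_q1 (isUnit_A1 hα hκ hκα)] at h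
  have hb : ‖fun j => -cexp (I * k * y j)‖ ≤ 1 := (pi_norm_le_iff_of_nonneg zero_le_one).2
    fun j => by rw [norm_neg, mul_assoc, ← ofReal_mul, norm_exp_I_mul_ofReal]
  calc _ ≤ 2 * ‖α⁻¹‖ ^ 2 * (n * (2 * κ)⁻¹) * 1 := h.trans (by gcongr)
    _ = n * ‖α⁻¹‖ ^ 2 / κ := by field_simp

def bornApprox (n : ℕ) (y : Fin n → ℝ) (α : Fin n → ℂ) (p : ℝ) : ℂ :=
  (2 * Real.pi : ℂ)⁻¹ * ∑ j, (-(α j)⁻¹) * cexp (I * p * y j)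

lemma norm_bornApprox_le (p : ℝ) : ‖bornApprox n y α p‖ ≤ n * ‖α⁻¹‖ :=
  (norm_fourierSum_le y (-α⁻¹) p).trans_eq (by rw [norm_neg])

lemma norm_bornApprox_sub_f1_le (hα : ∀ j, α j ≠ 0) (hκ : 0 < κ) (hκα : n * ‖α⁻¹‖ ≤ κ)
    (k ℓ : ℝ) : ‖bornApprox n y α (k - ℓ) - f1 n y α κ k ℓ‖ ≤ n * (n * ‖α⁻¹‖ ^ 2 / κ) := by
  have h : bornApprox n y α (k - ℓ) - f1 n y α κ k ℓ =
      (2 * Real.pi : ℂ)⁻¹ * ∑ j, ((α⁻¹ * fun j => -cexp (I * k * y j)) - q1 n y α κ k) j *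
        cexp (I * ↑(-ℓ) * y j) := by
    rw [bornApprox, f1, ← mul_sub, ← Finset.sum_sub_distrib]
    congr 1
    refine Finset.sum_congr rfl fun j _ => ?_
    rw [show I * ↑(k - ℓ) * y j = I * k * y j + I * ↑(-ℓ) * y j by push_cast; ring,
      show -I * ℓ * y j = I * ↑(-ℓ) * y j by push_cast; ring, Complex.exp_add]
    simp only [Pi.sub_apply, Pi.mul_apply, Pi.inv_apply]
    ring
  rw [h]
  refine (norm_fourierSum_le y _ _).trans ?_
  rw [norm_sub_rev]
  gcongr
  exact norm_q1_sub_inv_mul_le hα hκ hκα k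

lemma continuousAt_A1_inv (hα : ∀ j, α j ≠ 0) (hκ : 0 < κ) (hκα : n * ‖α⁻¹‖ ≤ κ) :
    ContinuousAt (fun κ => (A1 n y α κ)⁻¹) κ := by
  have hA : ContinuousAt (A1 n y α) κ := by
    refine continuousAt_pi.2 fun j => continuousAt_pi.2 fun j' => ?_
    unfold A1
    fun_prop (disch := simp [hκ.ne'])
  refine (continuousAt_matrix_inv _ ?_).comp hA
  rw [Ring.inverse_eq_inv']
  exact continuousAt_inv₀ ((isUnit_iff_isUnit_det _).1 (isUnit_A1 hα hκ hκα)).ne_zero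

def backscatteringAmplitude (n : ℕ) (y : Fin n → ℝ) (α : Fin n → ℂ) (p : ℝ) : ℂ :=
  f1 n y α (|p| / 2) (p / 2) (-p / 2)

lemma continuousOn_backscatteringAmplitude (hα : ∀ j, α j ≠ 0) {R : ℝ}
    (hR : 2 * (n * ‖α⁻¹‖) ≤ R) : ContinuousOn (backscatteringAmplitude n y α) {p | R < |p|} := by
  have hinv : Continuous fun p : {p : ℝ | R < |p|} => (A1 n y α (|(p : ℝ)| / 2))⁻¹ := by
    refine continuous_iff_continuousAt.2 fun p => ?_
    have hp : R < |(p : ℝ)| := p.2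
    have : 0 ≤ n * ‖α⁻¹‖ := by positivity
    exact (continuousAt_A1_inv hα (by linarith) (by linarith)).comp' (by fun_prop)
  rw [continuousOn_iff_continuous_domRestrict]
  unfold backscatteringAmplitude f1 q1
  simp only [Set.domRestrict_def]
  fun_prop

lemma aestronglyMeasurable_ite_mul_backscatteringAmplitude (hα : ∀ j, α j ≠ 0) {R : ℝ}
    (hR : 2 * (n * ‖α⁻¹‖) ≤ R) :
    AEStronglyMeasurable
      (fun p => (if |p| ≤ R then 0 else 1) * backscatteringAmplitude n y α p) volume := by
  have hS : MeasurableSet {p : ℝ | R < |p|} :=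
    measurableSet_lt measurable_const continuous_abs.measurable
  have h : (fun p => (if |p| ≤ R then 0 else 1) * backscatteringAmplitude n y α p) =
      {p | R < |p|}.indicator (backscatteringAmplitude n y α) := by
    ext p
    by_cases hp : |p| ≤ R <;> simp [Set.indicator_apply, hp]
  rw [h, aestronglyMeasurable_indicator_iff hS]
  exact (continuousOn_backscatteringAmplitude hα hR).aestronglyMeasurable hS

end Scattering

lemma memLp_inv_one_add_abs {p : ℝ≥0∞} (hp : 1 < p) :
    MemLp (fun x : ℝ => (1 + |x|)⁻¹) p volume := by
  have hmeas : AEStronglyMeasurable (fun x : ℝ => (1 + |x|)⁻¹) volume := by fun_prop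
  rcases eq_or_ne p ⊤ with rfl | hp_top
  · refine memLp_top_of_bound hmeas 1 (ae_of_all _ fun x => ?_)
    rw [Real.norm_of_nonneg (by positivity)]
    exact inv_le_one_of_one_le₀ (by simp)
  have hp₀ : p ≠ 0 := (zero_lt_one.trans hp).ne'
  rw [← memLp_norm_rpow_iff hmeas hp₀ hp_top, ENNReal.div_self hp₀ hp_top,
    memLp_one_iff_integrable]
  have hr : (Module.finrank ℝ ℝ : ℝ) < p.toReal := by
    simpa using (ENNReal.toReal_lt_toReal ENNReal.one_ne_top hp_top).2 hp
  refine (integrable_one_add_norm hr).congr (ae_of_all _ fun x => ?_)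
  have : 0 ≤ 1 + |x| := by positivity
  simp [Real.norm_eq_abs, abs_of_nonneg this, Real.rpow_neg this, Real.inv_rpow this]

lemma memLp_of_norm_le_of_norm_le_div {E : Type*} [NormedAddCommGroup E] {f : ℝ → E}
    {p : ℝ≥0∞} {R B C : ℝ} (hf : AEStronglyMeasurable f volume) (hR : 1 ≤ R)
    (hB : ∀ x, |x| ≤ R → ‖f x‖ ≤ B) (hC : ∀ x, R < |x| → ‖f x‖ ≤ C / |x|) (hp : 1 < p) :
    MemLp f p volume := by
  have hB₀ : 0 ≤ B := (norm_nonneg _).trans (hB 0 (by simp; linarith))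
  have hC₀ : 0 ≤ C := by
    have h := hC (R + 1) (by rw [abs_of_pos (by linarith)]; linarith)
    rw [le_div_iff₀ (by positivity)] at h
    exact (mul_nonneg (norm_nonneg _) (abs_nonneg _)).trans h
  refine ((memLp_inv_one_add_abs hp).const_mul (B * (1 + R) + 2 * C)).of_le hf
    (ae_of_all _ fun x => ?_)
  rw [Real.norm_of_nonneg (by positivity), ← div_eq_mul_inv, le_div_iff₀ (by positivity)]
  rcases le_or_gt |x| R with hx | hx
  · nlinarith [hB x hx, norm_nonneg (f x)]
  · have h := hC x hx
    rw [le_div_iff₀ (by linarith)] at h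
    nlinarith [norm_nonneg (f x)]

theorem stmt17_general (n : ℕ) (y : Fin n → ℝ) (α : Fin n → ℂ)
    (hα : ∀ j, α j ≠ 0) :
    ∃ E₀ > (0 : ℝ), (∀ κ : ℝ, Real.sqrt E₀ ≤ κ → IsUnit (A1 n y α κ)) ∧
      ∀ r : ℝ, 1 < r → r ≤ 2 →
        MeasureTheory.MemLp
          (fun p : ℝ =>
            (2 * Real.pi : ℂ)⁻¹ * ∑ j, (-(α j)⁻¹) * Complex.exp (Complex.I * p * y j) -
              (if |p| ≤ 2 * Real.sqrt E₀ then 0 else 1) *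
                f1 n y α (|p| / 2) (p / 2) (-p / 2))
          (ENNReal.ofReal r) MeasureTheory.volume := by
  set κ₀ := n * ‖α⁻¹‖ + 1
  have hnα : 0 ≤ n * ‖α⁻¹‖ := by positivity
  refine ⟨κ₀ ^ 2, by positivity, fun κ hκ => ?_, fun r hr _ => ?_⟩
  · rw [Real.sqrt_sq (by positivity)] at hκ
    exact isUnit_A1 hα (by linarith) (by linarith)
  rw [Real.sqrt_sq (by positivity)]
  refine memLp_of_norm_le_of_norm_le_div (R := 2 * κ₀) (B := n * ‖α⁻¹‖)
    (C := n * (n * ‖α⁻¹‖ ^ 2) * 2) ?_ (by linarith) (fun p hp => ?_) (fun p hp => ?_)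
    (ENNReal.one_lt_ofReal.2 hr)
  · exact (Continuous.aestronglyMeasurable (by fun_prop)).sub
      (aestronglyMeasurable_ite_mul_backscatteringAmplitude hα (by linarith))
  · rw [if_pos hp, zero_mul, sub_zero]
    exact norm_bornApprox_le p
  · rw [if_neg (not_le.2 hp), one_mul]
    have h := norm_bornApprox_sub_f1_le (y := y) (κ := |p| / 2) hα (by linarith) (by linarith)
      (p / 2) (-p / 2)
    rw [show p / 2 - -p / 2 = p by ring] at h
    exact h.trans_eq (by ring)

/-- Theorem 3.2, case d = 1: formula (3.22) underlying the inverse-scattering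
reconstruction. -/
theorem stmt17 (n : ℕ) (y : Fin n → ℝ) (α : Fin n → ℂ)
    (hy : Function.Injective y) (hα : ∀ j, α j ≠ 0) :
    ∃ E₀ > (0 : ℝ), (∀ κ : ℝ, Real.sqrt E₀ ≤ κ → IsUnit (A1 n y α κ)) ∧
      ∀ r : ℝ, 1 < r → r ≤ 2 →
        MeasureTheory.MemLp
          (fun p : ℝ =>
            (2 * Real.pi : ℂ)⁻¹ * ∑ j, (-(α j)⁻¹) * Complex.exp (Complex.I * p * y j) -
              (if |p| ≤ 2 * Real.sqrt E₀ then 0 else 1) *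
                f1 n y α (|p| / 2) (p / 2) (-p / 2))
          (ENNReal.ofReal r) MeasureTheory.volume :=
  stmt17_general n y α hα
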